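/- arXiv:1910.01626 — 2 statements merged into one kernel-verified Lean document; each statement's English description precedes it below -/
import Mathlib

section
/- Let 0 → Y → X → Z → 0 be a short exact sequence of Banach spaces with quotient map q : X → Z, where Y is (isometric to) the kernel of q. For ε > 0, let X_ε = {(εx, qx) : x ∈ X} be viewed as a subspace of X ⊕₁ Z (the direct sum with the norm ‖(u,v)‖ = ‖u‖ + ‖v‖), and view Y ⊕₁ Z as the subspace {(y, z) : y ∈ Y, z ∈ Z} of X ⊕₁ Z. Then the gap g(X_ε, Y ⊕₁ Z) tends to 0 as ε → 0. -/
noncomputable section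
open Metric Set

/-- The Kottman constant of a normed space. -/
def kottman (X : Type*) [NormedAddCommGroup X] : ℝ :=
  sSup {σ : ℝ | 0 < σ ∧ ∃ x : ℕ → X, (∀ n, ‖x n‖ ≤ 1) ∧
    ∀ n m, n ≠ m → σ ≤ ‖x n - x m‖}

def symKottman (X : Type*) [NormedAddCommGroup X] : ℝ :=
  sSup {σ : ℝ | 0 < σ ∧ ∃ x : ℕ → X, (∀ n, ‖x n‖ ≤ 1) ∧
    ∀ n m, n ≠ m → σ ≤ ‖x n - x m‖ ∧ σ ≤ ‖x n + x m‖}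

def finKottman (X : Type*) [NormedAddCommGroup X] : ℝ :=
  sSup {σ : ℝ | 0 < σ ∧ ∀ N : ℕ, ∃ x : Fin N → X, (∀ n, ‖x n‖ ≤ 1) ∧
    ∀ n m, n ≠ m → σ ≤ ‖x n - x m‖}

/-- The gap between two subsets (typically closed subspaces) of a normed space,
measured between their unit balls. -/
def gap {Z : Type*} [NormedAddCommGroup Z] (M N : Set Z) : ℝ :=
  max (sSup ((fun x => Metric.infDist x (N ∩ Metric.closedBall 0 1)) '' (M ∩ Metric.closedBall 0 1)))
      (sSup ((fun y => Metric.infDist y (M ∩ Metric.closedBall 0 1)) '' (N ∩ Metric.closedBall 0 1)))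

/-- The Kadets distance between two Banach spaces. -/
def kadets (X Y : Type*) [NormedAddCommGroup X] [NormedSpace ℝ X]
    [NormedAddCommGroup Y] [NormedSpace ℝ Y] : ℝ :=
  sInf {d : ℝ | ∃ (W : Type) (nW : NormedAddCommGroup W) (sW : NormedSpace ℝ W)
    (cW : CompleteSpace W) (i : X →ₗᵢ[ℝ] W) (j : Y →ₗᵢ[ℝ] W),
    d = gap (Set.range i) (Set.range j)}

/-- The isomorphic Kottman constant: infimum of Kottman constants over all
Banach spaces isomorphic to `X`. -/
def ikottman (X : Type) [NormedAddCommGroup X] [NormedSpace ℝ X] : ℝ :=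
  sInf {k : ℝ | ∃ (V : Type) (nV : NormedAddCommGroup V) (sV : NormedSpace ℝ V)
    (cV : CompleteSpace V) (e : X ≃L[ℝ] V), k = kottman V}

/-- Whitley's thickness constant. -/
def whitley (X : Type*) [NormedAddCommGroup X] : ℝ :=
  sInf {ε : ℝ | 0 < ε ∧ ∃ F : Finset X, (∀ f ∈ F, ‖f‖ = 1) ∧
    ∀ x : X, ‖x‖ = 1 → ∃ f ∈ F, ‖x - f‖ ≤ ε}

/-- The James constant. -/
def james (X : Type*) [NormedAddCommGroup X] : ℝ :=
  sSup {t : ℝ | ∃ x y : X, ‖x‖ = 1 ∧ ‖y‖ = 1 ∧ t = min ‖x - y‖ ‖x + y‖}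

def gconst (X : Type*) [NormedAddCommGroup X] : ℝ :=
  sInf {t : ℝ | ∃ x y : X, ‖x‖ = 1 ∧ ‖y‖ = 1 ∧ t = max ‖x - y‖ ‖x + y‖}

instance : Fact ((1 : ENNReal) ≤ 1) := ⟨le_refl _⟩

private lemma norm_pairL1 {X Z : Type*} [NormedAddCommGroup X] [NormedAddCommGroup Z] (a : X) (b : Z) :
    ‖(WithLp.equiv 1 (X × Z)).symm (a, b)‖ = ‖a‖ + ‖b‖ := by
  rw [WithLp.prod_norm_eq_add (by norm_num)]
  norm_num

private lemma sub_pairL1 {X Z : Type*} [NormedAddCommGroup X] [NormedAddCommGroup Z] (a c : X) (b d : Z) :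
    (WithLp.equiv 1 (X × Z)).symm (a, b) - (WithLp.equiv 1 (X × Z)).symm (c, d)
      = (WithLp.equiv 1 (X × Z)).symm (a - c, b - d) := rfl


private lemma gap_nonneg {W : Type*} [NormedAddCommGroup W] (M N : Set W) : 0 ≤ gap M N :=
  le_max_of_le_left (Real.sSup_nonneg (by rintro r ⟨p, _, rfl⟩; exact Metric.infDist_nonneg))

private lemma gap_bound (X Z : Type) [NormedAddCommGroup X] [NormedSpace ℝ X]
    [NormedAddCommGroup Z] [NormedSpace ℝ Z]
    (q : X →L[ℝ] Z) (C : ℝ) (hC : 0 < C)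
    (hpre : ∀ z, ∃ x, q x = z ∧ ‖x‖ ≤ C * ‖z‖)
    {ε : ℝ} (hε : 0 < ε) :
    gap
      {p : WithLp 1 (X × Z) | ∃ x : X, p = (WithLp.equiv 1 (X × Z)).symm (ε • x, q x)}
      {p : WithLp 1 (X × Z) | ((WithLp.equiv 1 (X × Z)) p).1 ∈ LinearMap.ker (q : X →ₗ[ℝ] Z)} ≤ 2 * C * ε := by
  have hbd : (0:ℝ) ≤ 2 * C * ε := by positivity
  set t : ℝ := 1 + ε * C with ht
  have ht0 : 0 < t := by nlinarith
  have hs0 : 0 < t⁻¹ := inv_pos.mpr ht0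
  have hst' : t⁻¹ * (1 + ε * C) = 1 := by rw [← ht]; exact inv_mul_cancel₀ ht0.ne'
  have hs1 : t⁻¹ ≤ 1 := by nlinarith [mul_pos hs0 (mul_pos hε hC)]
  have h1m : (0:ℝ) ≤ 1 - t⁻¹ := by linarith
  apply max_le
  · apply Real.sSup_le _ hbd
    rintro r ⟨p, ⟨⟨x, rfl⟩, hball⟩, rfl⟩
    rw [mem_closedBall_zero_iff, norm_pairL1] at hball
    have hB1 : ‖q x‖ ≤ 1 := le_trans (le_add_of_nonneg_left (norm_nonneg _)) hball
    obtain ⟨x', hqx', hx'⟩ := hpre (q x)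
    set a : X := t⁻¹ • (ε • x - ε • x') with ha
    set b : Z := t⁻¹ • q x with hb
    have h1 : ‖ε • x - ε • x'‖ ≤ ‖ε • x‖ + ε * ‖x'‖ := by
      refine (norm_sub_le _ _).trans ?_
      rw [norm_smul ε x', Real.norm_eq_abs, abs_of_pos hε]
    have k1 : ε * ‖x'‖ ≤ ε * (C * ‖q x‖) := mul_le_mul_of_nonneg_left hx' hε.le
    have k2 : ε * (C * ‖q x‖) ≤ ε * (C * 1) :=
      mul_le_mul_of_nonneg_left (mul_le_mul_of_nonneg_left hB1 hC.le) hε.le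
    have hmem : (WithLp.equiv 1 (X × Z)).symm (a, b) ∈
        {p : WithLp 1 (X × Z) | ((WithLp.equiv 1 (X × Z)) p).1 ∈ LinearMap.ker (q : X →ₗ[ℝ] Z)}
          ∩ Metric.closedBall 0 1 := by
      constructor
      · show a ∈ LinearMap.ker (q : X →ₗ[ℝ] Z)
        simp [ha, LinearMap.mem_ker, map_smul, map_sub, hqx']
      · rw [mem_closedBall_zero_iff, norm_pairL1, ha, hb,
          norm_smul t⁻¹ (ε • x - ε • x'), norm_smul t⁻¹ (q x),
          Real.norm_eq_abs, abs_of_pos hs0]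
        have hsum : ‖ε • x - ε • x'‖ + ‖q x‖ ≤ 1 + ε * C := by linarith
        have := mul_le_mul_of_nonneg_left hsum hs0.le
        linarith
    refine (Metric.infDist_le_dist_of_mem hmem).trans ?_
    rw [dist_eq_norm, sub_pairL1, norm_pairL1]
    have e1 : ε • x - a = (1 - t⁻¹) • (ε • x) + (t⁻¹ * ε) • x' := by
      rw [ha]; module
    have e2 : q x - b = (1 - t⁻¹) • q x := by rw [hb]; module
    have hn1 : ‖ε • x - a‖ ≤ (1 - t⁻¹) * ‖ε • x‖ + t⁻¹ * ε * ‖x'‖ := by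
      rw [e1]
      refine (norm_add_le _ _).trans (le_of_eq ?_)
      rw [norm_smul (1 - t⁻¹) (ε • x), norm_smul (t⁻¹ * ε) x',
        Real.norm_eq_abs, Real.norm_eq_abs, abs_of_nonneg h1m,
        abs_of_pos (mul_pos hs0 hε)]
    have hn2 : ‖q x - b‖ = (1 - t⁻¹) * ‖q x‖ := by
      rw [e2, norm_smul, Real.norm_eq_abs, abs_of_nonneg h1m]
    rw [hn2]
    -- linear arithmetic with products as atoms
    have k3 : (1 - t⁻¹) * (‖ε • x‖ + ‖q x‖) ≤ (1 - t⁻¹) * 1 :=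
      mul_le_mul_of_nonneg_left hball h1m
    have k4 : t⁻¹ * (ε * ‖x'‖) ≤ t⁻¹ * (ε * (C * 1)) :=
      mul_le_mul_of_nonneg_left (k1.trans k2) hs0.le
    have k5 : (1 - t⁻¹) * 1 = ε * C * t⁻¹ := by linarith
    have k6 : ε * C * t⁻¹ ≤ ε * C * 1 := mul_le_mul_of_nonneg_left hs1 (mul_pos hε hC).le
    linarith [hn1]
  · apply Real.sSup_le _ hbd
    rintro r ⟨p, ⟨hker, hball⟩, rfl⟩
    set y : X := ((WithLp.equiv 1 (X × Z)) p).1 with hy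
    set z : Z := ((WithLp.equiv 1 (X × Z)) p).2 with hz
    have hp : p = (WithLp.equiv 1 (X × Z)).symm (y, z) := rfl
    have hqy : q y = 0 := hker
    rw [mem_closedBall_zero_iff, hp, norm_pairL1] at hball
    have hz1 : ‖z‖ ≤ 1 := le_trans (le_add_of_nonneg_left (norm_nonneg _)) hball
    obtain ⟨x₀, hqx₀, hx₀⟩ := hpre z
    set xw : X := t⁻¹ • (ε⁻¹ • y + x₀) with hxw
    have e1 : ε • xw = t⁻¹ • y + (t⁻¹ * ε) • x₀ := by
      rw [hxw]
      match_scalars <;> field_simp <;> try ring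
    have e2 : q xw = t⁻¹ • z := by
      simp [hxw, map_smul, map_add, hqy, hqx₀]
    have k1 : ε * ‖x₀‖ ≤ ε * (C * ‖z‖) := mul_le_mul_of_nonneg_left hx₀ hε.le
    have k2 : ε * (C * ‖z‖) ≤ ε * (C * 1) :=
      mul_le_mul_of_nonneg_left (mul_le_mul_of_nonneg_left hz1 hC.le) hε.le
    have hmem : (WithLp.equiv 1 (X × Z)).symm (ε • xw, q xw) ∈
        {p : WithLp 1 (X × Z) | ∃ x : X, p = (WithLp.equiv 1 (X × Z)).symm (ε • x, q x)}
          ∩ Metric.closedBall 0 1 := by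
      refine ⟨⟨xw, rfl⟩, ?_⟩
      rw [mem_closedBall_zero_iff, norm_pairL1, e1, e2]
      have h1 : ‖t⁻¹ • y + (t⁻¹ * ε) • x₀‖ ≤ t⁻¹ * ‖y‖ + t⁻¹ * (ε * ‖x₀‖) := by
        refine (norm_add_le _ _).trans (le_of_eq ?_)
        rw [norm_smul t⁻¹ y, norm_smul (t⁻¹ * ε) x₀, Real.norm_eq_abs,
          Real.norm_eq_abs, abs_of_pos hs0, abs_of_pos (mul_pos hs0 hε)]
        ring
      have h2 : ‖t⁻¹ • z‖ = t⁻¹ * ‖z‖ := by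
        rw [norm_smul, Real.norm_eq_abs, abs_of_pos hs0]
      rw [h2]
      have k3 : t⁻¹ * (‖y‖ + ‖z‖) ≤ t⁻¹ * 1 := mul_le_mul_of_nonneg_left hball hs0.le
      have k4 : t⁻¹ * (ε * ‖x₀‖) ≤ t⁻¹ * (ε * C) := by
        refine mul_le_mul_of_nonneg_left ?_ hs0.le
        calc ε * ‖x₀‖ ≤ ε * (C * 1) := k1.trans k2
          _ = ε * C := by ring
      linarith
    refine (Metric.infDist_le_dist_of_mem hmem).trans ?_
    rw [dist_eq_norm, hp, sub_pairL1, norm_pairL1]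
    have e3 : y - ε • xw = (1 - t⁻¹) • y - (t⁻¹ * ε) • x₀ := by rw [e1]; module
    have e4 : z - q xw = (1 - t⁻¹) • z := by rw [e2]; module
    have hn1 : ‖y - ε • xw‖ ≤ (1 - t⁻¹) * ‖y‖ + t⁻¹ * ε * ‖x₀‖ := by
      rw [e3]
      refine (norm_sub_le _ _).trans (le_of_eq ?_)
      rw [norm_smul (1 - t⁻¹) y, norm_smul (t⁻¹ * ε) x₀, Real.norm_eq_abs,
        Real.norm_eq_abs, abs_of_nonneg h1m, abs_of_pos (mul_pos hs0 hε)]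
    have hn2 : ‖z - q xw‖ = (1 - t⁻¹) * ‖z‖ := by
      rw [e4, norm_smul, Real.norm_eq_abs, abs_of_nonneg h1m]
    rw [hn2]
    have k3 : (1 - t⁻¹) * (‖y‖ + ‖z‖) ≤ (1 - t⁻¹) * 1 :=
      mul_le_mul_of_nonneg_left hball h1m
    have k4 : t⁻¹ * (ε * ‖x₀‖) ≤ t⁻¹ * (ε * (C * 1)) :=
      mul_le_mul_of_nonneg_left (k1.trans k2) hs0.le
    have k5 : (1 - t⁻¹) * 1 = ε * C * t⁻¹ := by linarith
    have k6 : ε * C * t⁻¹ ≤ ε * C * 1 := mul_le_mul_of_nonneg_left hs1 (mul_pos hε hC).le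
    linarith [hn1]

/-- For a short exact sequence `0 → Y → X → Z → 0` of Banach spaces (with `Y = ker q`),
the gap between `X_ε = {(εx, qx) : x ∈ X}` and `Y ⊕₁ Z` inside `X ⊕₁ Z` tends to `0`
as `ε → 0⁺`. -/
theorem gap_twistedSubspace_tendsto_zero
    (X Z : Type) [NormedAddCommGroup X] [NormedSpace ℝ X] [CompleteSpace X]
    [NormedAddCommGroup Z] [NormedSpace ℝ Z] [CompleteSpace Z]
    (q : X →L[ℝ] Z) (hq : Function.Surjective q) :
    Filter.Tendsto
      (fun ε : ℝ =>
        gap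
          {p : WithLp 1 (X × Z) | ∃ x : X,
            p = (WithLp.equiv 1 (X × Z)).symm (ε • x, q x)}
          {p : WithLp 1 (X × Z) | ((WithLp.equiv 1 (X × Z)) p).1 ∈ LinearMap.ker (q : X →ₗ[ℝ] Z)})
      (nhdsWithin 0 (Set.Ioi 0)) (nhds 0) := by
  obtain ⟨C, hC0, hpre⟩ := q.exists_preimage_norm_le hq
  apply squeeze_zero' (g := fun ε => 2 * C * ε)
  · exact Filter.Eventually.of_forall fun ε => gap_nonneg _ _
  · filter_upwards [self_mem_nhdsWithin] with ε hε
    exact gap_bound X Z q C hC0 hpre hε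
  · have h : Filter.Tendsto (fun ε : ℝ => 2 * C * ε) (nhds 0) (nhds (2 * C * 0)) :=
      (continuous_const.mul continuous_id).tendsto 0
    rw [mul_zero] at h
    exact h.mono_left nhdsWithin_le_nhds
end
end

section
/- Let M and L be closed subspaces of a Banach space Z with gap g(M,L). Then the Whitley thickness constants satisfy |T(M) − T(L)| ≤ 4·g(M,L). -/
noncomputable section
open Metric Set

section Aux

variable {Z : Type} [NormedAddCommGroup Z] [NormedSpace ℝ Z]

lemma gap_comm' (M L : Set Z) : gap M L = gap L M := max_comm _ _

lemma gap_nonneg' (M L : Set Z) : 0 ≤ gap M L :=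
  le_trans (Real.sSup_nonneg fun v hv => by
    obtain ⟨x, -, rfl⟩ := hv; exact infDist_nonneg) (le_max_left _ _)

lemma whitleySet_bddBelow (X : Type*) [NormedAddCommGroup X] :
    BddBelow {ε : ℝ | 0 < ε ∧ ∃ F : Finset X, (∀ f ∈ F, ‖f‖ = 1) ∧
      ∀ x : X, ‖x‖ = 1 → ∃ f ∈ F, ‖x - f‖ ≤ ε} :=
  ⟨0, fun _ hx => hx.1.le⟩

lemma two_mem_whitleySet (X : Type*) [NormedAddCommGroup X] :
    (2:ℝ) ∈ {ε : ℝ | 0 < ε ∧ ∃ F : Finset X, (∀ f ∈ F, ‖f‖ = 1) ∧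
      ∀ x : X, ‖x‖ = 1 → ∃ f ∈ F, ‖x - f‖ ≤ ε} := by
  refine ⟨by norm_num, ?_⟩
  by_cases h : ∃ x : X, ‖x‖ = 1
  · refine ⟨{h.choose}, ?_, ?_⟩
    · intro f hf
      simp only [Finset.mem_singleton] at hf
      exact hf ▸ h.choose_spec
    · intro x hx
      refine ⟨h.choose, Finset.mem_singleton_self _, ?_⟩
      calc ‖x - h.choose‖ ≤ ‖x‖ + ‖h.choose‖ := norm_sub_le _ _
        _ ≤ 2 := by rw [hx, h.choose_spec]; norm_num
  · exact ⟨∅, by simp, fun x hx => absurd ⟨x, hx⟩ h⟩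

lemma whitley_nonneg (X : Type*) [NormedAddCommGroup X] : 0 ≤ whitley X :=
  Real.sInf_nonneg fun _ hx => hx.1.le

lemma whitley_le_two (X : Type*) [NormedAddCommGroup X] : whitley X ≤ 2 :=
  csInf_le (whitleySet_bddBelow X) (two_mem_whitleySet X)

lemma infDist_le_gap_left (M L : Set Z) (h0 : (0:Z) ∈ L) {x : Z}
    (hx : x ∈ M ∩ closedBall 0 1) :
    infDist x (L ∩ closedBall (0:Z) 1) ≤ gap M L := by
  have h0' : (0:Z) ∈ L ∩ closedBall (0:Z) 1 := ⟨h0, mem_closedBall_self (by norm_num)⟩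
  rw [gap]
  refine le_trans ?_ (le_max_left _ _)
  refine le_csSup ⟨1, ?_⟩ (mem_image_of_mem (fun x => infDist x ((L:Set Z) ∩ closedBall 0 1)) hx)
  rintro v ⟨x', hx', rfl⟩
  calc infDist x' (L ∩ closedBall 0 1) ≤ dist x' 0 :=
        infDist_le_dist_of_mem h0'
    _ ≤ 1 := by simpa [dist_zero_right] using mem_closedBall_zero_iff.mp hx'.2

lemma exists_unit_approx (M L : Submodule ℝ Z) (g δ : ℝ) (hδ : 0 < δ) (hgδ : g + δ < 1)
    (hg : ∀ x ∈ (M : Set Z) ∩ closedBall 0 1,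
      infDist x ((L : Set Z) ∩ closedBall 0 1) ≤ g)
    {x : Z} (hx : x ∈ M) (hx1 : ‖x‖ = 1) :
    ∃ l : Z, l ∈ L ∧ ‖l‖ = 1 ∧ ‖x - l‖ ≤ 2 * (g + δ) := by
  have hxm : x ∈ (M : Set Z) ∩ closedBall 0 1 := ⟨hx, by simp [mem_closedBall_zero_iff, hx1]⟩
  have h1 : infDist x ((L : Set Z) ∩ closedBall 0 1) < g + δ :=
    lt_of_le_of_lt (hg x hxm) (by linarith)
  have hne : ((L : Set Z) ∩ closedBall (0:Z) 1).Nonempty :=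
    ⟨0, L.zero_mem, mem_closedBall_self (by norm_num)⟩
  obtain ⟨l₀, hl₀, hd⟩ := (infDist_lt_iff hne).mp h1
  rw [dist_eq_norm] at hd
  have hnorm1 : ‖x‖ - ‖l₀‖ ≤ ‖x - l₀‖ := norm_sub_norm_le x l₀
  have hnl₀ : 1 - (g + δ) ≤ ‖l₀‖ := by rw [hx1] at hnorm1; linarith
  have hle1 : ‖l₀‖ ≤ 1 := mem_closedBall_zero_iff.mp hl₀.2
  have hpos : 0 < ‖l₀‖ := by linarith
  refine ⟨‖l₀‖⁻¹ • l₀, L.smul_mem _ hl₀.1, ?_, ?_⟩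
  · rw [norm_smul, Real.norm_eq_abs, abs_of_pos (inv_pos.mpr hpos), inv_mul_cancel₀ hpos.ne']
  · have h2 : ‖l₀ - ‖l₀‖⁻¹ • l₀‖ = 1 - ‖l₀‖ := by
      have he : l₀ - ‖l₀‖⁻¹ • l₀ = (1 - ‖l₀‖⁻¹) • l₀ := by rw [sub_smul, one_smul]
      rw [he, norm_smul, Real.norm_eq_abs]
      have hinv : 1 ≤ ‖l₀‖⁻¹ := (one_le_inv₀ hpos).mpr hle1
      rw [abs_of_nonpos (by linarith), neg_sub, sub_mul, inv_mul_cancel₀ hpos.ne', one_mul]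
    calc ‖x - ‖l₀‖⁻¹ • l₀‖ ≤ ‖x - l₀‖ + ‖l₀ - ‖l₀‖⁻¹ • l₀‖ := norm_sub_le_norm_sub_add_norm_sub _ _ _
      _ ≤ (g + δ) + (1 - ‖l₀‖) := by rw [h2]; linarith
      _ ≤ 2 * (g + δ) := by linarith

end Aux

section Main

variable {Z : Type} [NormedAddCommGroup Z] [NormedSpace ℝ Z]

lemma whitley_le_whitley_add (M L : Submodule ℝ Z)
    (hg : gap (M : Set Z) (L : Set Z) < 1/2) :
    whitley L ≤ whitley M + 4 * gap (M : Set Z) (L : Set Z) := by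
  set g := gap (M : Set Z) (L : Set Z) with hgdef
  have hkey : ∀ δ : ℝ, 0 < δ → g + δ < 1/2 →
      whitley L ≤ whitley M + 4 * g + 4 * δ := by
    intro δ hδ hgδ1
    have hgδ : g + δ < 1 := by linarith
    have hgM : ∀ x ∈ (M : Set Z) ∩ closedBall 0 1,
        infDist x ((L : Set Z) ∩ closedBall 0 1) ≤ g :=
      fun x hx => infDist_le_gap_left (M : Set Z) (L : Set Z) L.zero_mem hx
    have hgL : ∀ y ∈ (L : Set Z) ∩ closedBall 0 1,
        infDist y ((M : Set Z) ∩ closedBall 0 1) ≤ g := by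
      intro y hy
      have h := infDist_le_gap_left (L : Set Z) (M : Set Z) M.zero_mem hy
      rwa [← gap_comm'] at h
    have hmem : ∀ ε ∈ {ε : ℝ | 0 < ε ∧ ∃ F : Finset ↥M, (∀ f ∈ F, ‖f‖ = 1) ∧
        ∀ x : ↥M, ‖x‖ = 1 → ∃ f ∈ F, ‖x - f‖ ≤ ε},
        whitley ↥L ≤ ε + 4 * g + 4 * δ := by
      rintro ε ⟨hε, F, hF1, hF2⟩
      classical
      have hφex : ∀ f : ↥M, ‖f‖ = 1 →
          ∃ l : ↥L, ‖l‖ = 1 ∧ ‖(f : Z) - (l : Z)‖ ≤ 2 * (g + δ) := by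
        intro f hf
        obtain ⟨l, hlL, hl1, hld⟩ := exists_unit_approx M L g δ hδ hgδ hgM f.2
          (by rwa [Submodule.coe_norm] at hf)
        exact ⟨⟨l, hlL⟩, by simpa using hl1, by simpa using hld⟩
      set φ : ↥M → ↥L := fun f =>
        if h : ∃ l : ↥L, ‖l‖ = 1 ∧ ‖(f : Z) - (l : Z)‖ ≤ 2 * (g + δ) then h.choose else 0
        with hφdef
      have hφ : ∀ f : ↥M, ‖f‖ = 1 →
          ‖φ f‖ = 1 ∧ ‖(f : Z) - (φ f : Z)‖ ≤ 2 * (g + δ) := by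
        intro f hf
        have h := hφex f hf
        simp only [hφdef, dif_pos h]
        exact h.choose_spec
      have hgnn : 0 ≤ g := gap_nonneg' _ _
      have hLmem : ε + 4 * (g + δ) ∈ {ε' : ℝ | 0 < ε' ∧ ∃ G : Finset ↥L,
          (∀ f ∈ G, ‖f‖ = 1) ∧ ∀ x : ↥L, ‖x‖ = 1 → ∃ f ∈ G, ‖x - f‖ ≤ ε'} := by
        refine ⟨by linarith, F.image φ, ?_, ?_⟩
        · intro y hy
          obtain ⟨f, hfF, rfl⟩ := Finset.mem_image.mp hy
          exact (hφ f (hF1 f hfF)).1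
        · intro y hy
          obtain ⟨m, hmM, hm1, hmd⟩ := exists_unit_approx L M g δ hδ hgδ hgL y.2
            (by rwa [Submodule.coe_norm] at hy)
          obtain ⟨f, hfF, hfd⟩ := hF2 ⟨m, hmM⟩ (by simpa using hm1)
          refine ⟨φ f, Finset.mem_image_of_mem φ hfF, ?_⟩
          have h1 := (hφ f (hF1 f hfF)).2
          have hfd' : ‖m - (f : Z)‖ ≤ ε := by
            simpa [Submodule.coe_norm] using hfd
          have hmain : ‖(y : Z) - (φ f : Z)‖ ≤ ε + 4 * (g + δ) := by
            calc ‖(y : Z) - (φ f : Z)‖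
                ≤ ‖(y : Z) - (f : Z)‖ + ‖(f : Z) - (φ f : Z)‖ :=
                  norm_sub_le_norm_sub_add_norm_sub _ _ _
              _ ≤ (‖(y : Z) - m‖ + ‖m - (f : Z)‖) + ‖(f : Z) - (φ f : Z)‖ := by
                  have := norm_sub_le_norm_sub_add_norm_sub (y : Z) m (f : Z)
                  linarith
              _ ≤ ε + 4 * (g + δ) := by linarith
          simpa [Submodule.coe_norm] using hmain
      have hle : whitley ↥L ≤ ε + 4 * (g + δ) := by
        rw [whitley]
        exact csInf_le (whitleySet_bddBelow ↥L) hLmem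
      linarith
    have h2 : whitley ↥L - (4 * g + 4 * δ) ≤ whitley ↥M := by
      conv_rhs => rw [whitley]
      refine le_csInf ⟨2, two_mem_whitleySet ↥M⟩ fun ε hε => ?_
      have := hmem ε hε
      linarith
    linarith
  refine le_of_forall_pos_le_add fun ε hε => ?_
  have hδpos : 0 < min (ε/4) ((1/2 - g)/2) := lt_min (by linarith) (by linarith)
  have h1 := hkey _ hδpos (by
    have := min_le_right (ε/4) ((1/2 - g)/2); linarith)
  have h3 := min_le_left (ε/4) ((1/2 - g)/2)
  linarith

end Main

/-- For closed subspaces `M, L` of a Banach space `Z`, the Whitley thickness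
constants satisfy `|T(M) - T(L)| ≤ 4 g(M,L)`. -/
theorem abs_whitley_sub_whitley_le_four_mul_gap
    (Z : Type) [NormedAddCommGroup Z] [NormedSpace ℝ Z] [CompleteSpace Z]
    (M L : Submodule ℝ Z) (hM : IsClosed (M : Set Z)) (hL : IsClosed (L : Set Z)) :
    |whitley M - whitley L| ≤ 4 * gap (M : Set Z) (L : Set Z) := by
  have hg0 := gap_nonneg' (M : Set Z) (L : Set Z)
  rcases le_or_gt (1/2 : ℝ) (gap (M : Set Z) (L : Set Z)) with h | h
  · have a1 := whitley_nonneg ↥M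
    have a2 := whitley_nonneg ↥L
    have a3 := whitley_le_two ↥M
    have a4 := whitley_le_two ↥L
    rw [abs_sub_le_iff]
    constructor <;> linarith
  · have h1 := whitley_le_whitley_add M L h
    have h2 := whitley_le_whitley_add L M (by rwa [← gap_comm'] at h)
    rw [gap_comm' (L : Set Z) (M : Set Z)] at h2
    rw [abs_sub_le_iff]
    constructor <;> linarith
end
end
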